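/- arXiv:1406.6465 — 7 statements merged into one kernel-verified Lean document; each statement's English description precedes it below -/
import Mathlib

section
/- Let R be a commutative ring and let A = ∏_{i=1}^m A_i be a finite product of Artinian R-algebras. Let B be an R-subalgebra of A such that (i) for each i the canonical projection A → A_i maps B onto A_i, and (ii) A = B + J(A), i.e. every element of A is the sum of an element of B and an element of the Jacobson radical J(A). Then B = A. -/
section Aux

variable {S : Type*} [Ring S]

lemma aux_left_inv {x : S} (hx : x ∈ Ideal.jacobson (⊥ : Ideal S)) :
    ∃ z : S, z * (1 - x) = 1 := by
  obtain ⟨z, hz⟩ := Ideal.mem_jacobson_iff.mp hx (-1)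
  rw [Ideal.mem_bot] at hz
  refine ⟨z, ?_⟩
  have h : z * (1 - x) - 1 = 0 := by rw [← hz]; noncomm_ring
  exact sub_eq_zero.mp h

lemma aux_idem_zero {x : S} (hx : x ∈ Ideal.jacobson (⊥ : Ideal S))
    (h : IsIdempotentElem x) : x = 0 := by
  obtain ⟨z, hz⟩ := aux_left_inv hx
  calc x = (z * (1 - x)) * x := by rw [hz, one_mul]
    _ = z * (x - x * x) := by noncomm_ring
    _ = 0 := by rw [h.eq, sub_self, mul_zero]

lemma aux_nilpotent [IsArtinianRing S] {x : S}
    (hx : x ∈ Ideal.jacobson (⊥ : Ideal S)) : IsNilpotent x := by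
  have mono : ∀ {n m : ℕ}, n ≤ m → Ideal.span {x ^ m} ≤ Ideal.span {x ^ n} := by
    intro n m h
    rw [Ideal.span_le, Set.singleton_subset_iff]
    have hxm : x ^ m = x ^ (m - n) * x ^ n := by rw [← pow_add, Nat.sub_add_cancel h]
    rw [hxm]
    exact Ideal.mul_mem_left _ _ (Ideal.subset_span rfl)
  obtain ⟨n, hn⟩ := IsArtinian.monotone_stabilizes
    (⟨fun n => Ideal.span {x ^ n}, fun n m h => mono h⟩ : ℕ →o (Ideal S)ᵒᵈ)
  have heq : Ideal.span {x ^ n} = Ideal.span {x ^ (n + 1)} := hn (n + 1) (Nat.le_succ n)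
  have hx' : x ^ n ∈ Ideal.span {x ^ (n + 1)} := heq ▸ Ideal.subset_span rfl
  obtain ⟨c, hc⟩ := Submodule.mem_span_singleton.mp hx'
  have hc' : c * x ^ (n + 1) = x ^ n := hc
  refine ⟨n, ?_⟩
  obtain ⟨z, hz⟩ := aux_left_inv (Ideal.mul_mem_left _ c hx)
  have h0 : (1 - c * x) * x ^ n = 0 := by
    have : x ^ (n + 1) = x * x ^ n := pow_succ' x n
    rw [this] at hc'
    calc (1 - c * x) * x ^ n = x ^ n - c * (x * x ^ n) := by noncomm_ring
      _ = 0 := by rw [hc', sub_self]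
  calc x ^ n = (z * (1 - c * x)) * x ^ n := by rw [hz, one_mul]
    _ = z * ((1 - c * x) * x ^ n) := by rw [mul_assoc]
    _ = 0 := by rw [h0, mul_zero]

lemma aux_one_sub_pow {I : Ideal S} {x : S} (hx : x ∈ I) (n : ℕ) :
    1 - (1 - x) ^ n ∈ I := by
  obtain ⟨c, hc⟩ := (Commute.one_left (MulOpposite.op (1 - x))).sub_dvd_pow_sub_pow n
  have h : 1 - (1 - x) ^ n = c.unop * x := by
    have h2 := congrArg MulOpposite.unop hc
    simpa [mul_sub, sub_mul] using h2
  rw [h]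
  exact Ideal.mul_mem_left _ _ hx

lemma aux_pow_mem {I : Ideal S} {x : S} (hx : x ∈ I) (n : ℕ) : x ^ (n + 1) ∈ I := by
  rw [pow_succ]
  exact Ideal.mul_mem_left _ _ hx

lemma aux_proj {ι : Type*} [DecidableEq ι] {A : ι → Type*} [∀ i, Ring (A i)]
    {j : ∀ i, A i} (hj : j ∈ Ideal.jacobson (⊥ : Ideal (∀ i, A i))) (k : ι) :
    j k ∈ Ideal.jacobson (⊥ : Ideal (A k)) := by
  rw [Ideal.mem_jacobson_iff]
  intro y
  obtain ⟨z, hz⟩ := Ideal.mem_jacobson_iff.mp hj (Pi.single k y)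
  rw [Ideal.mem_bot] at hz
  refine ⟨z k, ?_⟩
  rw [Ideal.mem_bot]
  have h := congrFun hz k
  simpa using h

end Aux

/-- Let `R` be a commutative ring and `A = ∏ᵢ Aᵢ` a finite product of
Artinian `R`-algebras.  If `B` is an `R`-subalgebra of `A` such that each projection
`A → Aᵢ` maps `B` onto `Aᵢ`, and `A = B + J(A)` where `J(A)` is the Jacobson radical
of `A`, then `B = A`. -/
theorem stmt_0 (R : Type*) [CommRing R] (m : ℕ) (A : Fin m → Type*)
    [∀ i, Ring (A i)] [∀ i, Algebra R (A i)] [∀ i, IsArtinianRing (A i)]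
    (B : Subalgebra R (∀ i, A i))
    (hproj : ∀ (i : Fin m) (x : A i), ∃ b ∈ B, b i = x)
    (hsum : ∀ a : ∀ i, A i, ∃ b ∈ B, ∃ j ∈ Ideal.jacobson (⊥ : Ideal (∀ i, A i)), a = b + j) :
    B = ⊤ := by
  classical
  -- Step 1: each idempotent `Pi.single i 1` belongs to `B`.
  have key : ∀ i : Fin m, (Pi.single i 1 : ∀ k, A k) ∈ B := by
    intro i
    obtain ⟨b, hbB, j, hjJ, hbj⟩ := hsum (Pi.single i 1)
    -- coordinatewise nilpotency of `b - b ^ 2`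
    have hnil : ∀ k : Fin m, IsNilpotent (b k - (b k) ^ 2) := by
      intro k
      apply aux_nilpotent
      have hjk : j k ∈ Ideal.jacobson (⊥ : Ideal (A k)) := aux_proj hjJ k
      have hbk : b k = (Pi.single i 1 : ∀ k, A k) k - j k := by
        have h := congrFun hbj k
        rw [Pi.add_apply] at h
        rw [h, add_sub_cancel_right]
      rcases eq_or_ne k i with rfl | hk
      · rw [Pi.single_eq_same] at hbk
        have h : b k - (b k) ^ 2 = j k - j k * j k := by rw [hbk]; noncomm_ring
        rw [h]
        exact Ideal.sub_mem _ hjk (Ideal.mul_mem_left _ _ hjk)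
      · rw [Pi.single_eq_of_ne hk] at hbk
        have h : b k - (b k) ^ 2 = -(j k) - j k * j k := by rw [hbk]; noncomm_ring
        rw [h]
        exact Ideal.sub_mem _ (neg_mem hjk) (Ideal.mul_mem_left _ _ hjk)
    choose n hn using hnil
    set N : ℕ := Finset.univ.sup n + 1 with hNdef
    have hNk : ∀ k, (b k - (b k) ^ 2) ^ N = 0 := by
      intro k
      have h1 : n k ≤ N := le_trans (Finset.le_sup (Finset.mem_univ k)) (Nat.le_succ _)
      rw [← Nat.sub_add_cancel h1, pow_add, hn k, mul_zero]
    have hNg : (b - b ^ 2) ^ N = 0 := by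
      funext k
      simpa using hNk k
    set e : ∀ k, A k := 1 - (1 - b ^ N) ^ N with he_def
    have he : IsIdempotentElem e := isIdempotentElem_one_sub_one_sub_pow_pow b N hNg
    have heB : e ∈ B :=
      B.sub_mem B.one_mem (B.pow_mem (B.sub_mem B.one_mem (B.pow_mem hbB N)) N)
    have hcoord : ∀ k, e k = (Pi.single i 1 : ∀ k, A k) k := by
      intro k
      have hjk : j k ∈ Ideal.jacobson (⊥ : Ideal (A k)) := aux_proj hjJ k
      have hbk : b k = (Pi.single i 1 : ∀ k, A k) k - j k := by
        have h := congrFun hbj k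
        rw [Pi.add_apply] at h
        rw [h, add_sub_cancel_right]
      have hek : e k = 1 - (1 - (b k) ^ N) ^ N := by
        simp [he_def]
      rcases eq_or_ne k i with rfl | hk
      · -- e k = 1
        rw [Pi.single_eq_same] at hbk ⊢
        have h1 : (1 : A k) - b k ∈ Ideal.jacobson (⊥ : Ideal (A k)) := by
          rw [hbk]; simpa using hjk
        have h2 : (1 : A k) - (b k) ^ N ∈ Ideal.jacobson (⊥ : Ideal (A k)) := by
          have := aux_one_sub_pow h1 N
          simpa using this
        have h3 : ((1 : A k) - (b k) ^ N) ^ N ∈ Ideal.jacobson (⊥ : Ideal (A k)) :=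
          hNdef ▸ aux_pow_mem h2 (Finset.univ.sup n)
        have h5 : IsIdempotentElem ((1 - e) k) := congrFun he.one_sub k
        have h6 : (1 - e) k = ((1 : A k) - (b k) ^ N) ^ N := by
          simp [he_def]
        rw [h6] at h5
        have h7 := aux_idem_zero h3 h5
        rw [hek, h7, sub_zero]
      · -- e k = 0
        rw [Pi.single_eq_of_ne hk] at hbk ⊢
        have h1 : b k ∈ Ideal.jacobson (⊥ : Ideal (A k)) := by
          rw [hbk]; simpa using neg_mem hjk
        have h2 : (b k) ^ N ∈ Ideal.jacobson (⊥ : Ideal (A k)) :=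
          hNdef ▸ aux_pow_mem h1 (Finset.univ.sup n)
        have h3 : e k ∈ Ideal.jacobson (⊥ : Ideal (A k)) := by
          rw [hek]
          exact aux_one_sub_pow h2 N
        have h4 : IsIdempotentElem (e k) := congrFun he k
        exact aux_idem_zero h3 h4
    have : e = Pi.single i 1 := funext hcoord
    rwa [this] at heB
  -- Step 2: conclude `B = ⊤`.
  rw [eq_top_iff]
  rintro a -
  choose c hcB hci using fun i => hproj i (a i)
  have hsum' : (∑ i, (Pi.single i 1 : ∀ k, A k) * c i) = a := by
    funext k
    rw [Finset.sum_apply]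
    rw [Finset.sum_eq_single k (fun i _ hik => by
        simp [Pi.single_eq_of_ne (Ne.symm hik)])
      (fun h => absurd (Finset.mem_univ k) h)]
    simp [hci k]
  rw [← hsum']
  exact Subalgebra.sum_mem B fun i _ => B.mul_mem (key i) (hcB i)
end

section
/- Let R be a commutative ring and let A = ∏_{i=1}^m A_i be a product of Artinian primary R-algebras, each finitely generated as an R-module, such that for all i, j the simple quotients A_i/J(A_i) and A_j/J(A_j) are isomorphic as R-algebras. Let I be the annihilator in R of A_1/J(A_1) and F = R/I (so F is a field and each A_i/J(A_i) is a finite-dimensional simple F-algebra). Let k be a positive integer and let a_l = (a_{l1}, …, a_{lm}) ∈ A for l = 1, …, k. Then a_1, …, a_k generate A as an R-algebra if and only if both: (1) for each i = 1, …, m the elements a_{1i}, …, a_{ki} generate A_i as an R-algebra, and (2) for all i ≠ j there is no F-algebra isomorphism Ψ : A_j/J(A_j) → A_i/J(A_i) such that Ψ(a_{lj} + J(A_j)) = a_{li} + J(A_i) for all l = 1, …, k. -/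
/-!
Write `Φ : ∏ Aᵢ → ∏ Sᵢ` for the product of the quotient maps; its kernel is nil because the
Jacobson radical of an Artinian ring is nilpotent. Let `B` be the subalgebra generated by the
`aₗ`. By Goursat's lemma for products of simple algebras, `Φ(B) = ∏ Sᵢ` as soon as `B` maps onto
every `Sᵢ` and no two coordinates of `Φ(B)` are tied together by an isomorphism `Sⱼ ≃ Sᵢ`. For a
subalgebra `C` of `∏ Sᵢ` and two indices this comes from the two-sided ideal `{cᵢ | c ∈ C, cⱼ = 0}`
of the simple ring `Sᵢ`: if it is everything then some `c ∈ C` has `cᵢ = 1, cⱼ = 0`, and if it is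
zero then `cⱼ ↦ cᵢ` is an isomorphism. Then each central idempotent `eᵢ = (0, …, 1, …, 0)` of
`∏ Sᵢ` lifts along the nil kernel to an idempotent of `B`, which must be `eᵢ` itself, and
`B ⊇ eᵢ B = Aᵢ`.
-/

open Function

section Pi

variable {ι : Type*} {A : ι → Type*}

theorem Pi.isNilpotent_of_forall_isNilpotent [Finite ι] [∀ i, MonoidWithZero (A i)]
    {x : ∀ i, A i} (hx : ∀ i, IsNilpotent (x i)) : IsNilpotent x := by
  have := Fintype.ofFinite ι
  choose n hn using hx
  exact ⟨Finset.univ.sup n, funext fun i =>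
    pow_eq_zero_of_le (Finset.le_sup (Finset.mem_univ i)) (hn i)⟩

theorem Pi.commute_single_one [DecidableEq ι] [∀ i, Ring (A i)] (i : ι) (x : ∀ i, A i) :
    Commute (Pi.single i 1) x := by
  rw [Commute, SemiconjBy, ← Pi.single_mul_left, ← Pi.single_mul_right, one_mul, mul_one]

end Pi

theorem IsArtinianRing.isNilpotent_of_mem_jacobson_bot {A : Type*} [Ring A] [IsArtinianRing A]
    {x : A} (hx : x ∈ Ideal.jacobson (⊥ : Ideal A)) : IsNilpotent x := by
  obtain ⟨n, hn⟩ := IsArtinianRing.isNilpotent_jacobson_bot (R := A)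
  exact ⟨n, by simpa [hn] using Ideal.pow_mem_pow hx n⟩

namespace Subalgebra

variable {R ι : Type*} [CommRing R] {A : ι → Type*} [∀ i, Ring (A i)] [∀ i, Algebra R (A i)]
  (C : Subalgebra R (∀ i, A i))

theorem exists_mem_apply_eq_one_apply_eq_zero {i j : ι} [IsSimpleRing (A i)]
    [IsSimpleRing (A j)] (hi : ∀ x : A i, ∃ c ∈ C, c i = x) (hj : ∀ y : A j, ∃ c ∈ C, c j = y)
    (hgraph : ¬ ∃ Ψ : A j ≃ₐ[R] A i, ∀ c ∈ C, c i = Ψ (c j)) :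
    ∃ c ∈ C, c i = 1 ∧ c j = 0 := by
  let T : TwoSidedIdeal (A i) := .mk' {x | ∃ c ∈ C, c i = x ∧ c j = 0}
    ⟨0, C.zero_mem, rfl, rfl⟩
    (fun ⟨c, hc, hci, hcj⟩ ⟨d, hd, hdi, hdj⟩ =>
      ⟨c + d, C.add_mem hc hd, by simp [hci, hdi], by simp [hcj, hdj]⟩)
    (fun ⟨c, hc, hci, hcj⟩ => ⟨-c, C.neg_mem hc, by simp [hci], by simp [hcj]⟩)
    (fun {x} _ ⟨c, hc, hci, hcj⟩ => by
      obtain ⟨d, hd, hdi⟩ := hi x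
      exact ⟨d * c, C.mul_mem hd hc, by simp [hci, hdi], by simp [hcj]⟩)
    (fun {_ y} ⟨c, hc, hci, hcj⟩ => by
      obtain ⟨d, hd, hdi⟩ := hi y
      exact ⟨c * d, C.mul_mem hc hd, by simp [hci, hdi], by simp [hcj]⟩)
  have memT (x : A i) : x ∈ T ↔ ∃ c ∈ C, c i = x ∧ c j = 0 := TwoSidedIdeal.mem_mk' ..
  rcases IsSimpleRing.simple.eq_bot_or_eq_top T with hT | hT
  · refine absurd ?_ hgraph
    let fi : C →+* A i := ((Pi.evalAlgHom R A i).comp C.val : C →ₐ[R] A i)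
    let fj : C →+* A j := ((Pi.evalAlgHom R A j).comp C.val : C →ₐ[R] A j)
    have hfj : Surjective fj := fun y => by
      obtain ⟨c, hc, rfl⟩ := hj y
      exact ⟨⟨c, hc⟩, rfl⟩
    -- `T = ⊥` says that a `c ∈ C` vanishing at `j` vanishes at `i`, so `c j ↦ c i` is well defined
    have hker : RingHom.ker fj ≤ RingHom.ker fi := fun c hc => by
      have : fi c ∈ T := (memT _).2 ⟨c, c.2, rfl, hc⟩
      rwa [hT, TwoSidedIdeal.mem_bot] at this
    let ψ : A j →+* A i := fj.liftOfSurjective hfj ⟨fi, hker⟩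
    have hψ (c : C) : ψ (c.1 j) = c.1 i := fj.liftOfSurjective_comp_apply hfj ⟨fi, hker⟩ c
    let Ψ : A j →ₐ[R] A i :=
      { ψ with commutes' := fun r => hψ (algebraMap R C r) }
    have hΨ : Surjective Ψ := fun x => by
      obtain ⟨c, hc, rfl⟩ := hi x
      exact ⟨c j, hψ ⟨c, hc⟩⟩
    exact ⟨.ofBijective Ψ ⟨ψ.injective, hΨ⟩, fun c hc => (hψ ⟨c, hc⟩).symm⟩
  · exact (memT 1).1 (by simp [hT])

theorem exists_mem_apply_eq_one_forall_apply_eq_zero {i : ι} (s : Finset ι) (hi : i ∉ s)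
    (h : ∀ j ∈ s, ∃ c ∈ C, c i = 1 ∧ c j = 0) :
    ∃ c ∈ C, c i = 1 ∧ ∀ j ∈ s, c j = 0 := by
  classical
  induction s using Finset.induction_on with
  | empty => exact ⟨1, C.one_mem, rfl, by simp⟩
  | insert j s hjs ih =>
    obtain ⟨c, hc, hci, hcs⟩ := ih (fun h' => hi (Finset.mem_insert_of_mem h'))
      fun k hk => h k (Finset.mem_insert_of_mem hk)
    obtain ⟨d, hd, hdi, hdj⟩ := h j (Finset.mem_insert_self j s)
    refine ⟨c * d, C.mul_mem hc hd, by simp [hci, hdi], ?_⟩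
    simp only [Finset.mem_insert, forall_eq_or_imp, Pi.mul_apply, hdj, mul_zero, true_and]
    exact fun k hk => by rw [hcs k hk, zero_mul]

theorem pi_single_one_mem [Fintype ι] [DecidableEq ι] (i : ι)
    (h : ∀ j, j ≠ i → ∃ c ∈ C, c i = 1 ∧ c j = 0) : Pi.single i 1 ∈ C := by
  obtain ⟨c, hc, hci, hcj⟩ := C.exists_mem_apply_eq_one_forall_apply_eq_zero
    (Finset.univ.erase i) (Finset.notMem_erase i _) fun j hj => h j (Finset.ne_of_mem_erase hj)
  convert hc using 1
  funext j
  rcases eq_or_ne j i with rfl | hji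
  · rw [Pi.single_eq_same, hci]
  · rw [Pi.single_eq_of_ne hji, hcj j (Finset.mem_erase.2 ⟨hji, Finset.mem_univ j⟩)]

theorem eq_top_of_pi_single_one_mem [Fintype ι] [DecidableEq ι]
    (hC : ∀ i (x : A i), ∃ c ∈ C, c i = x) (hsingle : ∀ i, Pi.single i 1 ∈ C) : C = ⊤ := by
  refine eq_top_iff.2 fun x _ => ?_
  rw [← Finset.univ_sum_single x]
  refine C.sum_mem fun i _ => ?_
  obtain ⟨c, hc, hci⟩ := hC i (x i)
  rw [← hci, ← one_mul (c i), Pi.single_mul_left]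
  exact C.mul_mem (hsingle i) hc

/-- **Goursat's lemma** for subalgebras of a finite product of simple algebras. -/
theorem eq_top_of_apply_surjective_of_isSimpleRing [Finite ι] [∀ i, IsSimpleRing (A i)]
    (hC : ∀ i (x : A i), ∃ c ∈ C, c i = x)
    (hgraph : ∀ i j, i ≠ j → ¬ ∃ Ψ : A j ≃ₐ[R] A i, ∀ c ∈ C, c i = Ψ (c j)) : C = ⊤ := by
  classical
  have := Fintype.ofFinite ι
  refine C.eq_top_of_pi_single_one_mem hC fun i => C.pi_single_one_mem i fun j hji => ?_
  exact C.exists_mem_apply_eq_one_apply_eq_zero (hC i) (hC j) (hgraph i j hji.symm)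

variable {P Q : Type*} [Ring P] [Ring Q] [Algebra R P] [Algebra R Q]

theorem mem_of_isIdempotentElem_of_ker_isNilpotent (B : Subalgebra R P) (φ : P →ₐ[R] Q)
    (hφ : ∀ x ∈ RingHom.ker φ, IsNilpotent x) (hB : B.map φ = ⊤) {e : P}
    (he : IsIdempotentElem e) (he_central : ∀ x, Commute e x) : e ∈ B := by
  let φB : B →+* Q := (φ.comp B.val : B →ₐ[R] Q)
  have hφB : ∀ x ∈ RingHom.ker φB, IsNilpotent x := fun x hx =>
    (IsNilpotent.map_iff (f := B.val) Subtype.val_injective).1 (hφ x hx)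
  have hrange : φ e ∈ φB.range := by
    obtain ⟨b, hb, hbe⟩ := Subalgebra.mem_map.1 (hB ▸ Algebra.mem_top : φ e ∈ B.map φ)
    exact ⟨⟨b, hb⟩, hbe⟩
  obtain ⟨e', he', hφe'⟩ :=
    exists_isIdempotentElem_eq_of_ker_isNilpotent φB hφB _ hrange (he.map φ)
  have hsub : (e' : P) - e ∈ RingHom.ker φ := by
    rw [RingHom.mem_ker, map_sub, sub_eq_zero]
    exact hφe'
  have : (e' : P) = e := eq_of_isNilpotent_sub_of_isIdempotentElem_of_commute
    (he'.map B.val) he (hφ _ hsub) (he_central _).symm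
  exact this ▸ e'.2

end Subalgebra

theorem Algebra.map_evalAlgHom_adjoin_range {R ι κ : Type*} [CommRing R] {A : ι → Type*}
    [∀ i, Ring (A i)] [∀ i, Algebra R (A i)] (a : κ → ∀ i, A i) (i : ι) :
    (Algebra.adjoin R (Set.range a)).map (Pi.evalAlgHom R A i) =
      Algebra.adjoin R (Set.range fun l => a l i) := by
  rw [AlgHom.map_adjoin, ← Set.range_comp]
  rfl

theorem Subalgebra.eq_top_of_apply_surjective_of_ker_isNilpotent {R ι : Type*} [CommRing R]
    [Finite ι] {A S : ι → Type*} [∀ i, Ring (A i)] [∀ i, Algebra R (A i)] [∀ i, Ring (S i)]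
    [∀ i, Algebra R (S i)] [∀ i, IsSimpleRing (S i)] (π : ∀ i, A i →ₐ[R] S i)
    (hπ : ∀ i, Surjective (π i)) (hker : ∀ i x, π i x = 0 → IsNilpotent x)
    (B : Subalgebra R (∀ i, A i)) (hB : ∀ i (x : A i), ∃ b ∈ B, b i = x)
    (hgraph : ∀ i j, i ≠ j → ¬ ∃ Ψ : S j ≃ₐ[R] S i, ∀ b ∈ B, π i (b i) = Ψ (π j (b j))) :
    B = ⊤ := by
  classical
  have := Fintype.ofFinite ι
  let Φ : (∀ i, A i) →ₐ[R] ∀ i, S i := AlgHom.pi fun i => (π i).comp (Pi.evalAlgHom R A i)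
  have hΦB : B.map Φ = ⊤ := by
    refine (B.map Φ).eq_top_of_apply_surjective_of_isSimpleRing (fun i y => ?_)
      fun i j hij ⟨Ψ, hΨ⟩ => hgraph i j hij ⟨Ψ, fun b hb => hΨ (Φ b) ⟨b, hb, rfl⟩⟩
    obtain ⟨x, rfl⟩ := hπ i y
    obtain ⟨b, hb, rfl⟩ := hB i x
    exact ⟨Φ b, ⟨b, hb, rfl⟩, rfl⟩
  have hΦ : ∀ x ∈ RingHom.ker Φ, IsNilpotent x := fun x hx =>
    Pi.isNilpotent_of_forall_isNilpotent fun i => hker i _ (congrFun hx i)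
  refine B.eq_top_of_pi_single_one_mem hB fun i =>
    B.mem_of_isIdempotentElem_of_ker_isNilpotent Φ hΦ hΦB ?_ (Pi.commute_single_one i)
  rw [IsIdempotentElem, ← Pi.single_mul, one_mul]

theorem stmt_1_general (R : Type*) [CommRing R] (m : ℕ) (A : Fin m → Type*)
    [∀ i, Ring (A i)] [∀ i, Algebra R (A i)] [∀ i, IsArtinianRing (A i)]
    (S : Fin m → Type*) [∀ i, Ring (S i)] [∀ i, Algebra R (S i)]
    (π : ∀ i, A i →ₐ[R] S i)
    (hsurj : ∀ i, Function.Surjective (π i))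
    (hker : ∀ i, RingHom.ker ((π i) : A i →+* S i) = Ideal.jacobson (⊥ : Ideal (A i)))
    (hsimple : ∀ i, IsSimpleRing (S i))
    (k : ℕ) (a : Fin k → ∀ i, A i) :
    Algebra.adjoin R (Set.range a) = ⊤ ↔
      ((∀ i, Algebra.adjoin R (Set.range fun l => a l i) = ⊤) ∧
        ∀ i j, i ≠ j →
          ¬ ∃ Ψ : S j ≃ₐ[R] S i, ∀ l, π i (a l i) = Ψ (π j (a l j))) := by
  have hmap := Algebra.map_evalAlgHom_adjoin_range (R := R) a
  constructor
  · intro h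
    refine ⟨fun i => ?_, ?_⟩
    · rw [← hmap i, h, Algebra.map_top, AlgHom.range_eq_top]
      exact Function.surjective_eval i
    rintro i j hij ⟨Ψ, hΨ⟩
    have hall := AlgHom.ext_iff.1 <| AlgHom.ext_of_adjoin_eq_top h
      (φ₁ := (π i).comp (Pi.evalAlgHom R A i))
      (φ₂ := (Ψ : S j →ₐ[R] S i).comp ((π j).comp (Pi.evalAlgHom R A j)))
      (Set.forall_mem_range.2 hΨ)
    classical
    simpa [Pi.single_eq_of_ne hij.symm] using hall (Pi.single i 1)
  · rintro ⟨hgen, hgraph⟩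
    refine Subalgebra.eq_top_of_apply_surjective_of_ker_isNilpotent π hsurj
      (fun i x hx => IsArtinianRing.isNilpotent_of_mem_jacobson_bot (hker i ▸ hx)) _
      (fun i x => ?_) fun i j hij ⟨Ψ, hΨ⟩ =>
        hgraph i j hij ⟨Ψ, fun l => hΨ _ (Algebra.subset_adjoin ⟨l, rfl⟩)⟩
    obtain ⟨b, hb, rfl⟩ := Subalgebra.mem_map.1 ((hmap i).trans (hgen i) ▸ Algebra.mem_top :
      x ∈ (Algebra.adjoin R (Set.range a)).map (Pi.evalAlgHom R A i))
    exact ⟨b, hb, rfl⟩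

/-- Let `R` be a commutative ring and `A = ∏ᵢ Aᵢ` a finite product of
Artinian primary `R`-algebras, each finitely generated as an `R`-module, whose simple
quotients `Aᵢ/J(Aᵢ)` are pairwise isomorphic as `R`-algebras.  Here the simple quotient
of `Aᵢ` is presented as a surjective `R`-algebra map `πᵢ : Aᵢ → Sᵢ` onto a simple ring
`Sᵢ` with kernel the Jacobson radical `J(Aᵢ)`.  (Since the `R`-module structure on each
`Sᵢ` factors through the field `F = R/I`, where `I` is the annihilator of the simple
quotients, `F`-algebra isomorphisms between the `Sᵢ` are exactly `R`-algebra
isomorphisms, and that is how condition (2) is stated.)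

Then a `k`-tuple `a₁, …, a_k` of elements of `A` generates `A` as an `R`-algebra iff
(1) for each `i` the components `a₁ᵢ, …, a_{ki}` generate `Aᵢ` as an `R`-algebra, and
(2) for `i ≠ j` there is no (`F`- equivalently `R`-) algebra isomorphism
`Ψ : Sⱼ ≃ Sᵢ` with `Ψ(πⱼ(a_{lj})) = πᵢ(a_{li})` for all `l`. -/
theorem stmt_1 (R : Type*) [CommRing R] (m : ℕ) (A : Fin m → Type*)
    [∀ i, Ring (A i)] [∀ i, Algebra R (A i)] [∀ i, IsArtinianRing (A i)]
    [∀ i, Module.Finite R (A i)]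
    (S : Fin m → Type*) [∀ i, Ring (S i)] [∀ i, Algebra R (S i)]
    (π : ∀ i, A i →ₐ[R] S i)
    (hsurj : ∀ i, Function.Surjective (π i))
    (hker : ∀ i, RingHom.ker ((π i) : A i →+* S i) = Ideal.jacobson (⊥ : Ideal (A i)))
    (hsimple : ∀ i, IsSimpleRing (S i))
    (hiso : ∀ i j, Nonempty (S i ≃ₐ[R] S j))
    (k : ℕ) (hk : 0 < k) (a : Fin k → ∀ i, A i) :
    Algebra.adjoin R (Set.range a) = ⊤ ↔
      ((∀ i, Algebra.adjoin R (Set.range fun l => a l i) = ⊤) ∧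
        ∀ i j, i ≠ j →
          ¬ ∃ Ψ : S j ≃ₐ[R] S i, ∀ l, π i (a l i) = Ψ (π j (a l j))) :=
  stmt_1_general R m A S π hsurj hker hsimple k a
end

section
/- Let R be a commutative ring, let A be an R-algebra having finitely many elements, let f : A → B be a surjective homomorphism of R-algebras, and let k be a positive integer. Then there exists a non-negative integer g such that for every k-tuple (b_1, …, b_k) of elements generating B as an R-algebra, the number of k-tuples (a_1, …, a_k) ∈ A^k with f(a_i) = b_i for all i and such that (a_1, …, a_k) generates A as an R-algebra is exactly g. -/
open Algebra Function

section aux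
variable {R A B : Type*} [CommRing R] [Ring A] [Ring B] [Algebra R A] [Algebra R B]

/-- Fibers of `f` within a subalgebra `S` over two points in the image of `S` have equal size. -/
lemma fiber_card_eq (f : A →ₐ[R] B) (S : Subalgebra R A) {b b' : B}
    (hb : ∃ x ∈ S, f x = b) (hb' : ∃ x ∈ S, f x = b') :
    Nat.card {x : A // x ∈ S ∧ f x = b} = Nat.card {x : A // x ∈ S ∧ f x = b'} := by
  obtain ⟨x0, hx0S, hx0⟩ := hb
  obtain ⟨x1, hx1S, hx1⟩ := hb'
  apply Nat.card_congr
  refine ⟨fun x => ⟨x.1 - x0 + x1, S.add_mem (S.sub_mem x.2.1 hx0S) hx1S, ?_⟩,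
          fun x => ⟨x.1 - x1 + x0, S.add_mem (S.sub_mem x.2.1 hx1S) hx0S, ?_⟩, ?_, ?_⟩
  · simp [map_add, map_sub, x.2.2, hx0, hx1]
  · simp [map_add, map_sub, x.2.2, hx0, hx1]
  · intro x; ext; push_cast; abel
  · intro x; ext; push_cast; abel

lemma natCard_sigma {ι : Type*} [Fintype ι] {α : ι → Type*} [∀ i, Finite (α i)] :
    Nat.card (Σ i, α i) = ∑ i, Nat.card (α i) := by
  classical
  haveI := fun i => Fintype.ofFinite (α i)
  simp [Nat.card_eq_fintype_card, Fintype.card_sigma]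

/-- Number of lifts of `b` generating exactly `S`. -/
noncomputable def NN (f : A →ₐ[R] B) (k : ℕ) (S : Subalgebra R A) (b : Fin k → B) : ℕ :=
  Nat.card {a : Fin k → A // (∀ i, f (a i) = b i) ∧ Algebra.adjoin R (Set.range a) = S}

lemma key [Finite A] (f : A →ₐ[R] B) (k : ℕ) (S : Subalgebra R A) :
    ∀ b b' : Fin k → B, Algebra.adjoin R (Set.range b) = ⊤ →
      Algebra.adjoin R (Set.range b') = ⊤ → NN f k S b = NN f k S b' := by
  classical
  haveI : Finite (Subalgebra R A) :=
    Finite.of_injective ((↑) : Subalgebra R A → Set A) SetLike.coe_injective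
  haveI : Fintype (Subalgebra R A) := Fintype.ofFinite _
  haveI : WellFoundedLT (Subalgebra R A) := Finite.to_wellFoundedLT
  induction S using WellFoundedLT.induction with
  | ind S IH =>
  intro b b' hb hb'
  by_cases hS : S.map f = ⊤
  · -- the key counting step
    -- lifts into S of a tuple c
    have hcount : ∀ c : Fin k → B, (∀ i, c i ∈ S.map f) →
        Nat.card {a : Fin k → A // ∀ i, a i ∈ S ∧ f (a i) = c i} =
        NN f k S c + ∑ T ∈ Finset.univ.erase S,
          (if T ≤ S then NN f k T c else 0) := by
      intro c hc
      have h1 : Nat.card {a : Fin k → A // ∀ i, a i ∈ S ∧ f (a i) = c i} =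
          ∑ T : Subalgebra R A, Nat.card
            {a : {a : Fin k → A // ∀ i, a i ∈ S ∧ f (a i) = c i} //
              Algebra.adjoin R (Set.range a.1) = T} := by
        rw [← Nat.card_congr (Equiv.sigmaFiberEquiv
          (fun a : {a : Fin k → A // ∀ i, a i ∈ S ∧ f (a i) = c i} =>
            Algebra.adjoin R (Set.range a.1))), natCard_sigma]
      have h2 : ∀ T : Subalgebra R A,
          Nat.card {a : {a : Fin k → A // ∀ i, a i ∈ S ∧ f (a i) = c i} //
              Algebra.adjoin R (Set.range a.1) = T} =
          if T ≤ S then NN f k T c else 0 := by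
        intro T
        by_cases hTS : T ≤ S
        · rw [if_pos hTS]
          apply Nat.card_congr
          have hmem : ∀ (y : {a : Fin k → A //
              (∀ i, f (a i) = c i) ∧ Algebra.adjoin R (Set.range a) = T}) (i : Fin k),
              y.1 i ∈ S := by
            intro y i
            have h := Algebra.subset_adjoin (R := R) (Set.mem_range_self (f := y.1) i)
            rw [y.2.2] at h
            exact hTS h
          refine ⟨fun x => ⟨x.1.1, fun i => (x.1.2 i).2, x.2⟩,
            fun y => ⟨⟨y.1, fun i => ⟨hmem y i, y.2.1 i⟩⟩, y.2.2⟩, fun x => rfl, fun y => rfl⟩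
        · rw [if_neg hTS]
          have : IsEmpty {a : {a : Fin k → A // ∀ i, a i ∈ S ∧ f (a i) = c i} //
              Algebra.adjoin R (Set.range a.1) = T} := by
            constructor
            rintro ⟨⟨a, ha⟩, hadj⟩
            exact hTS (hadj ▸ Algebra.adjoin_le (Set.range_subset_iff.mpr fun i => (ha i).1))
          exact Nat.card_of_isEmpty
      rw [h1]
      simp_rw [h2]
      rw [← Finset.add_sum_erase Finset.univ _ (Finset.mem_univ S), if_pos le_rfl]
    have hbS : ∀ i, b i ∈ S.map f := fun i => hS ▸ trivial
    have hb'S : ∀ i, b' i ∈ S.map f := fun i => hS ▸ trivial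
    -- total count of lifts into S is independent of c
    have htot : Nat.card {a : Fin k → A // ∀ i, a i ∈ S ∧ f (a i) = b i} =
        Nat.card {a : Fin k → A // ∀ i, a i ∈ S ∧ f (a i) = b' i} := by
      rw [Nat.card_congr (Equiv.subtypePiEquivPi
            (p := fun (i : Fin k) (x : A) => x ∈ S ∧ f x = b i)),
          Nat.card_congr (Equiv.subtypePiEquivPi
            (p := fun (i : Fin k) (x : A) => x ∈ S ∧ f x = b' i)),
          Nat.card_pi, Nat.card_pi]
      apply Finset.prod_congr rfl
      intro i _
      have h1 := hbS i; have h2 := hb'S i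
      rw [Subalgebra.mem_map] at h1 h2
      exact fiber_card_eq f S h1 h2
    have hrest : (∑ T ∈ Finset.univ.erase S, (if T ≤ S then NN f k T b else 0)) =
        ∑ T ∈ Finset.univ.erase S, (if T ≤ S then NN f k T b' else 0) := by
      apply Finset.sum_congr rfl
      intro T hT
      by_cases hTS : T ≤ S
      · rw [if_pos hTS, if_pos hTS]
        exact IH T (lt_of_le_of_ne hTS (Finset.ne_of_mem_erase hT)) b b' hb hb'
      · rw [if_neg hTS, if_neg hTS]
    have h3 := (hcount b hbS).symm.trans (htot.trans (hcount b' hb'S))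
    rw [hrest] at h3
    exact Nat.add_right_cancel h3
  · -- S does not surject onto B: no lift generating S exists
    have h0 : ∀ c : Fin k → B, Algebra.adjoin R (Set.range c) = ⊤ → NN f k S c = 0 := by
      intro c hc
      have : IsEmpty {a : Fin k → A //
          (∀ i, f (a i) = c i) ∧ Algebra.adjoin R (Set.range a) = S} := by
        constructor
        rintro ⟨a, h1, h2⟩
        apply hS
        have : ⇑f ∘ a = c := funext h1
        rw [← h2, AlgHom.map_adjoin, ← Set.range_comp, this, hc]
      exact Nat.card_of_isEmpty
    rw [h0 b hb, h0 b' hb']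

end aux

/-- **Gaschütz-type lifting.** Let `R` be a commutative ring, `A` a finite
`R`-algebra, `f : A → B` a surjective `R`-algebra homomorphism and `k ≥ 1`.  Then there
is a non-negative integer `g` such that every generating `k`-tuple of the `R`-algebra
`B` lifts to exactly `g` generating `k`-tuples of `A`. -/
theorem stmt_2 (R : Type*) [CommRing R] (A B : Type*) [Ring A] [Ring B]
    [Algebra R A] [Algebra R B] [Finite A]
    (f : A →ₐ[R] B) (hf : Function.Surjective f) (k : ℕ) (hk : 0 < k) :
    ∃ g : ℕ, ∀ b : Fin k → B, Algebra.adjoin R (Set.range b) = ⊤ →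
      Nat.card {a : Fin k → A //
        (∀ i, f (a i) = b i) ∧ Algebra.adjoin R (Set.range a) = ⊤} = g := by
  by_cases hex : ∃ b : Fin k → B, Algebra.adjoin R (Set.range b) = ⊤
  · obtain ⟨b₀, hb₀⟩ := hex
    exact ⟨NN f k ⊤ b₀, fun b hb => key f k ⊤ b b₀ hb hb₀⟩
  · exact ⟨0, fun b hb => absurd ⟨b, hb⟩ hex⟩
end

section
/- Let R be a commutative ring and let A be an Artinian R-algebra with Jacobson radical J = J(A). If elements b_1, …, b_k of A/J² generate A/J² as an R-algebra, then any elements a_1, …, a_k of A mapping to b_1, …, b_k under the quotient map A → A/J² generate A as an R-algebra. In particular, if A has finitely many elements, then every k-tuple generating A/J² as an R-algebra has exactly |J²|^k lifts to k-tuples of elements of A, and all of these lifts generate A as an R-algebra. -/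
/-!
Write `S` for the subalgebra generated by the lifts and `J` for the radical. Since the lifts
generate modulo `J²`, `S + J² = A`, and by modularity `J = (J ∩ S) + J²`. Expanding the powers
gives `J^m ⊆ (J ∩ S)^m + J^(m+1) ⊆ S + J^(m+1)`, so `S + J^m = A` for every `m ≥ 2`.
The radical of an Artinian ring is nilpotent, hence `S = A`. The count follows because the lifts
of a fixed tuple form a coset of `(J²)^k`.
-/

namespace Submodule

variable {R A : Type*} [CommSemiring R] [Semiring A] [Algebra R A]

theorem sup_sq_pow_le {T J : Submodule R A} (hTJ : T ≤ J) (hJ : J * J ≤ J) (m : ℕ) :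
    (T ⊔ J ^ 2) ^ m ≤ T ^ m ⊔ J ^ (m + 1) := by
  induction m with
  | zero => simp
  | succ m ih =>
    have hTm : T ^ m * J ^ 2 ≤ J ^ (m + 2) := by
      rw [pow_add]; exact mul_le_mul_left (pow_le_pow_left' hTJ m) _
    have hJT : J ^ (m + 1) * T ≤ J ^ (m + 2) := by
      rw [pow_succ _ (m + 1)]; exact mul_le_mul_right hTJ _
    have hJJ : J ^ (m + 1) * J ^ 2 ≤ J ^ (m + 2) := by
      rw [sq, pow_succ _ (m + 1)]; exact mul_le_mul_right hJ _
    calc (T ⊔ J ^ 2) ^ (m + 1) ≤ (T ^ m ⊔ J ^ (m + 1)) * (T ⊔ J ^ 2) :=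
          pow_succ (T ⊔ J ^ 2) m ▸ mul_le_mul_left ih _
      _ = T ^ (m + 1) ⊔ T ^ m * J ^ 2 ⊔ (J ^ (m + 1) * T ⊔ J ^ (m + 1) * J ^ 2) := by
          rw [sup_mul, mul_sup, mul_sup, pow_succ T m]
      _ ≤ T ^ (m + 1) ⊔ J ^ (m + 2) :=
          sup_le (sup_le le_sup_left (hTm.trans le_sup_right))
            (sup_le (hJT.trans le_sup_right) (hJJ.trans le_sup_right))

end Submodule

namespace Subalgebra

section

variable {R A : Type*} [CommSemiring R] [Semiring A] [Algebra R A]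

theorem toSubmodule_pow_le (S : Subalgebra R A) (m : ℕ) : toSubmodule S ^ m ≤ toSubmodule S := by
  induction m with
  | zero => exact Submodule.one_le.2 S.one_mem
  | succ m ih =>
    rw [pow_succ]
    exact Submodule.mul_le.2 fun x hx y hy => S.mul_mem (ih hx) hy

end

section

variable {R A : Type*} [CommRing R] [Ring A] [Algebra R A]

theorem eq_top_of_sup_sq_eq_top {S : Subalgebra R A} {J : Submodule R A} (hJ : J * J ≤ J)
    (hnil : IsNilpotent J) (hS : toSubmodule S ⊔ J ^ 2 = ⊤) : S = ⊤ := by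
  set T := J ⊓ toSubmodule S
  have hJT : J ≤ T ⊔ J ^ 2 := by
    rw [inf_sup_assoc_of_le _ (sq J ▸ hJ), hS, inf_top_eq]
  have hstep (m : ℕ) : toSubmodule S ⊔ J ^ m ≤ toSubmodule S ⊔ J ^ (m + 1) := by
    refine sup_le le_sup_left ?_
    calc J ^ m ≤ (T ⊔ J ^ 2) ^ m := pow_le_pow_left' hJT m
      _ ≤ T ^ m ⊔ J ^ (m + 1) := Submodule.sup_sq_pow_le inf_le_left hJ m
      _ ≤ toSubmodule S ⊔ J ^ (m + 1) :=
          sup_le_sup_right ((pow_le_pow_left' inf_le_right m).trans (S.toSubmodule_pow_le m)) _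
  obtain ⟨n, hn⟩ := hnil
  have hvanish : J ^ (n + 2) = ⊥ := by rw [pow_add, hn, zero_mul, Submodule.zero_eq_bot]
  rw [← Algebra.toSubmodule_eq_top, eq_top_iff, ← hS]
  simpa [hvanish] using monotone_nat_of_le_succ hstep (by omega : 2 ≤ n + 2)

end

end Subalgebra

namespace Ideal

variable {R A : Type*} [CommSemiring R] [Semiring A] [Algebra R A]

theorem mul_restrictScalars_le (M : Submodule R A) (I : Ideal A) :
    M * I.restrictScalars R ≤ I.restrictScalars R :=
  Submodule.mul_le.2 fun x _ _ hy => I.mul_mem_left x hy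

theorem isNilpotent_restrictScalars {I : Ideal A} (hI : IsNilpotent I) :
    IsNilpotent (I.restrictScalars R) := by
  obtain ⟨n, hn⟩ := hI
  refine ⟨n + 1, ?_⟩
  rw [← Submodule.restrictScalars_pow n.succ_ne_zero, Submodule.pow_succ, hn,
    Submodule.zero_eq_bot, Submodule.bot_mul]
  rfl

end Ideal

theorem AlgHom.adjoin_eq_top_of_adjoin_image_eq_top {R A Q : Type*} [CommRing R] [Ring A]
    [Algebra R A] [Ring Q] [Algebra R Q] {J : Submodule R A} (hJ : J * J ≤ J)
    (hnil : IsNilpotent J) (π : A →ₐ[R] Q)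
    (hker : (RingHom.ker (π : A →+* Q)).restrictScalars R = J ^ 2) {s : Set A}
    (hs : Algebra.adjoin R (π '' s) = ⊤) : Algebra.adjoin R s = ⊤ := by
  refine Subalgebra.eq_top_of_sup_sq_eq_top hJ hnil ?_
  change LinearMap.ker π.toLinearMap = J ^ 2 at hker
  rw [← hker, ← Submodule.comap_map_eq, ← Subalgebra.map_toSubmodule, AlgHom.map_adjoin, hs,
    Algebra.top_toSubmodule, Submodule.comap_top]

theorem AddMonoidHom.card_lifts_of_surjective {A Q ι : Type*} [AddGroup A] [AddGroup Q]
    [Fintype ι] {f : A →+ Q} (hf : Function.Surjective f) (b : ι → Q) :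
    Nat.card {a : ι → A // ∀ i, f (a i) = b i} = Nat.card f.ker ^ Fintype.card ι := by
  rw [Nat.card_congr (Equiv.subtypePiEquivPi (p := fun i x => f x = b i)), Nat.card_pi]
  calc ∏ i, Nat.card {x // f x = b i} = ∏ _i : ι, Nat.card f.ker :=
        Finset.prod_congr rfl fun i _ => Nat.card_congr (f.fiberEquivKerOfSurjective hf (b i))
    _ = Nat.card f.ker ^ Fintype.card ι := Finset.prod_const _

theorem stmt_4_general (R : Type*) [CommRing R] (A : Type*) [Ring A] [Algebra R A]
    [IsArtinianRing A]
    (Q : Type*) [Ring Q] [Algebra R Q]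
    (π : A →ₐ[R] Q) (hπ : Function.Surjective π)
    (hker : (RingHom.ker (π : A →+* Q)).restrictScalars R
      = (Ideal.jacobson (⊥ : Ideal A)).restrictScalars R ^ 2)
    (k : ℕ) :
    (∀ b : Fin k → Q, Algebra.adjoin R (Set.range b) = ⊤ →
      ∀ a : Fin k → A, (∀ i, π (a i) = b i) → Algebra.adjoin R (Set.range a) = ⊤)
    ∧ (Finite A → ∀ b : Fin k → Q, Algebra.adjoin R (Set.range b) = ⊤ →
        Nat.card {a : Fin k → A //
          (∀ i, π (a i) = b i) ∧ Algebra.adjoin R (Set.range a) = ⊤}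
          = Nat.card ((Ideal.jacobson (⊥ : Ideal A)).restrictScalars R ^ 2 : Submodule R A) ^ k) := by
  have lifts_generate (b : Fin k → Q) (hb : Algebra.adjoin R (Set.range b) = ⊤)
      (a : Fin k → A) (ha : ∀ i, π (a i) = b i) : Algebra.adjoin R (Set.range a) = ⊤ := by
    refine AlgHom.adjoin_eq_top_of_adjoin_image_eq_top (Ideal.mul_restrictScalars_le _ _)
      (Ideal.isNilpotent_restrictScalars IsArtinianRing.isNilpotent_jacobson_bot) π hker ?_
    rwa [← Set.range_comp, show π ∘ a = b from funext ha]
  refine ⟨lifts_generate, fun _ b hb => ?_⟩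
  calc Nat.card {a : Fin k → A // (∀ i, π (a i) = b i) ∧ Algebra.adjoin R (Set.range a) = ⊤}
      = Nat.card {a : Fin k → A // ∀ i, (π : A →+* Q).toAddMonoidHom (a i) = b i} :=
        Nat.card_congr <| Equiv.subtypeEquivRight fun a =>
          ⟨And.left, fun ha => ⟨ha, lifts_generate b hb a ha⟩⟩
    _ = Nat.card ((Ideal.jacobson (⊥ : Ideal A)).restrictScalars R ^ 2 : Submodule R A) ^ k := by
        rw [AddMonoidHom.card_lifts_of_surjective hπ, Fintype.card_fin, ← hker]
        rfl

/-- Let `R` be a commutative ring and `A` an Artinian `R`-algebra with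
Jacobson radical `J = J(A)`.  The quotient `A/J²` is presented as a surjective
`R`-algebra map `π : A → Q` whose kernel is `J²`.  If `b₁, …, b_k` generate `Q = A/J²`
as an `R`-algebra, then any lifts `a₁, …, a_k` of the `bᵢ` generate `A` as an
`R`-algebra.  In particular, if `A` is finite then every generating `k`-tuple of `A/J²`
has exactly `|J²|^k` lifts to `k`-tuples of `A` generating `A` as an
`R`-algebra (i.e. `g_k(A, A/J²) = |J²|^k`). -/
theorem stmt_4 (R : Type*) [CommRing R] (A : Type*) [Ring A] [Algebra R A]
    [IsArtinianRing A]
    (Q : Type*) [Ring Q] [Algebra R Q]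
    (π : A →ₐ[R] Q) (hπ : Function.Surjective π)
    (hker : (RingHom.ker (π : A →+* Q)).restrictScalars R
      = (Ideal.jacobson (⊥ : Ideal A)).restrictScalars R ^ 2)
    (k : ℕ) (hk : 0 < k) :
    (∀ b : Fin k → Q, Algebra.adjoin R (Set.range b) = ⊤ →
      ∀ a : Fin k → A, (∀ i, π (a i) = b i) → Algebra.adjoin R (Set.range a) = ⊤)
    ∧ (Finite A → ∀ b : Fin k → Q, Algebra.adjoin R (Set.range b) = ⊤ →
        Nat.card {a : Fin k → A //
          (∀ i, π (a i) = b i) ∧ Algebra.adjoin R (Set.range a) = ⊤}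
          = Nat.card ((Ideal.jacobson (⊥ : Ideal A)).restrictScalars R ^ 2 : Submodule R A) ^ k) :=
  stmt_4_general R A Q π hπ hker k
end

section
/- Let K ⊆ E be finite fields (E a finite field extension of K) and let n be a positive integer. Then the number of matrices C ∈ GL_n(E) satisfying C · M_n(K) · C⁻¹ = M_n(K), where M_n(K) denotes the subring of M_n(E) of matrices with all entries in K, is equal to |GL_n(K)| · (|E| − 1)/(|K| − 1). -/
/-!
Conjugating the matrix unit `E_ij` by `C` gives the matrix with entries `C a i * C⁻¹ j b`, so if
conjugation by `C` preserves `Mₙ(K)`, all these products lie in `K`. Scaling `C` by a nonzero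
entry of `C⁻¹` therefore gives an invertible matrix over `K`: the matrices in question are exactly
the image of `GLₙ(K) × Eˣ → GLₙ(E)`, `(A, e) ↦ A e`. The kernel of this homomorphism is
`{(k, k⁻¹) | k ∈ Kˣ}`, so the image has `|GLₙ(K)| · |Eˣ| / |Kˣ|` elements.
-/

open Matrix

theorem Units.conj_mul_of_forall_commute {M : Type*} [Monoid M] (u z : Mˣ)
    (hz : ∀ x : M, Commute (z : M) x) (x : M) :
    (↑(u * z) : M) * x * ↑(u * z)⁻¹ = ↑u * x * ↑u⁻¹ := by
  rw [_root_.mul_inv_rev, Units.val_mul, Units.val_mul, mul_assoc (u : M), (hz x).eq]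
  simp [mul_assoc]

theorem Submonoid.image_conj_eq_self {M : Type*} [Monoid M] {S : Submonoid M} {u : Mˣ}
    (hu : (u : M) ∈ S) (hu' : ((u⁻¹ : Mˣ) : M) ∈ S) :
    (fun x : M => (u : M) * x * ↑u⁻¹) '' (S : Set M) = S := by
  refine subset_antisymm ?_ fun x hx => ⟨↑u⁻¹ * x * ↑u, ?_, ?_⟩
  · rintro _ ⟨x, hx, rfl⟩
    exact mul_mem (mul_mem hu hx) hu'
  · exact mul_mem (mul_mem hu' hx) hu
  · simp [mul_assoc]

theorem Set.matrix_range {m n α β : Type*} (f : α → β) :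
    (Set.range f).matrix = Set.range fun A : Matrix m n α => A.map f := by
  ext M
  refine ⟨fun h => ?_, ?_⟩
  · choose A hA using h
    exact ⟨of A, Matrix.ext hA⟩
  · rintro ⟨A, rfl⟩ i j
    exact ⟨A i j, rfl⟩

namespace Matrix

theorem mul_single_one_mul_apply {l m o p α : Type*} [Fintype m] [Fintype o] [DecidableEq m]
    [DecidableEq o] [NonAssocSemiring α] (C : Matrix l m α) (D : Matrix o p α) (i : m) (j : o)
    (a : l) (b : p) : (C * single i j (1 : α) * D) a b = C a i * D j b := by
  simp [mul_apply, single_apply, ite_and]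

theorem isUnit_map_iff_of_field {n K E : Type*} [Fintype n] [DecidableEq n] [Field K]
    [CommRing E] [Nontrivial E] (f : K →+* E) (A : Matrix n n K) :
    IsUnit (A.map f) ↔ IsUnit A := by
  rw [isUnit_iff_isUnit_det, isUnit_iff_isUnit_det, ← RingHom.mapMatrix_apply, ← RingHom.map_det,
    isUnit_map_iff]

namespace GeneralLinearGroup

variable (K E n : Type*) [Field K] [Field E] [Algebra K E] [Fintype n] [DecidableEq n]

def mapMulScalar : GL n K × Eˣ →* GL n E :=
  (map (algebraMap K E)).noncommCoprod (scalar n) fun _ e => (scalar_commute e _).symm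

variable {K E n}

theorem mapMulScalar_apply (A : GL n K) (e : Eˣ) :
    mapMulScalar K E n (A, e) = map (algebraMap K E) A * scalar n e :=
  rfl

theorem conj_mapMulScalar (A : GL n K) (e : Eˣ) (M : Matrix n n E) :
    (mapMulScalar K E n (A, e) : Matrix n n E) * M * ((mapMulScalar K E n (A, e))⁻¹ : GL n E) =
      (map (algebraMap K E) A : Matrix n n E) * M * ((map (algebraMap K E) A)⁻¹ : GL n E) :=
  Units.conj_mul_of_forall_commute _ _ (fun _ => Matrix.scalar_commute _ (Commute.all _) _) M

theorem image_conj_mapMulScalar (p : GL n K × Eˣ) :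
    (fun M => (mapMulScalar K E n p : Matrix n n E) * M * ((mapMulScalar K E n p)⁻¹ : GL n E)) ''
      ((algebraMap K E).range : Set E).matrix = ((algebraMap K E).range : Set E).matrix := by
  obtain ⟨A, e⟩ := p
  simp only [conj_mapMulScalar]
  have hmem : ∀ B : GL n K,
      (map (algebraMap K E) B : Matrix n n E) ∈ (algebraMap K E).range.matrix.toSubmonoid :=
    fun B i j => ⟨B i j, rfl⟩
  exact Submonoid.image_conj_eq_self (hmem A) (map_inv (map (algebraMap K E)) A ▸ hmem A⁻¹)

theorem mem_range_mapMulScalar_of_mapsTo [Nonempty n] {C : GL n E}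
    (hC : Set.MapsTo (fun M => (C : Matrix n n E) * M * (C⁻¹ : GL n E))
      ((algebraMap K E).range : Set E).matrix ((algebraMap K E).range : Set E).matrix) :
    C ∈ (mapMulScalar K E n).range := by
  have entry_mul_mem : ∀ a i j b, C a i * C⁻¹ j b ∈ (algebraMap K E).range := fun a i j b => by
    have hsingle : single i j (1 : E) ∈ ((algebraMap K E).range : Set E).matrix := fun k l => by
      by_cases h : i = k ∧ j = l <;> simp [h]
    have := hC hsingle a b
    dsimp only at this
    rwa [mul_single_one_mul_apply] at this
  obtain ⟨j, b, hd⟩ : ∃ j b, C⁻¹ j b ≠ 0 := by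
    by_contra! h
    exact (C⁻¹).ne_zero (Matrix.ext h)
  obtain ⟨A, hA⟩ : ∃ A : Matrix n n K, A.map (algebraMap K E) = C⁻¹ j b • (C : Matrix n n E) := by
    rw [← Set.mem_range, ← Set.matrix_range]
    intro a i
    simpa [mul_comm] using entry_mul_mem a i j b
  have hAunit : IsUnit A := by
    rw [← isUnit_map_iff_of_field (algebraMap K E), hA, ← Units.val_mk0 hd, ← Units.smul_def]
    exact C.isUnit.smul _
  refine ⟨(hAunit.unit, (Units.mk0 _ hd)⁻¹), Units.ext ?_⟩
  rw [mapMulScalar_apply, Units.val_mul, val_map_apply, IsUnit.unit_spec, hA, coe_scalar,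
    scalar_apply, ← smul_one_eq_diagonal, Matrix.mul_smul, Matrix.mul_one, smul_smul,
    Units.val_inv_eq_inv_val, Units.val_mk0, inv_mul_cancel₀ hd, one_smul]

theorem image_conj_eq_iff_mem_range_mapMulScalar [Nonempty n] (C : GL n E) :
    (fun M => (C : Matrix n n E) * M * (C⁻¹ : GL n E)) ''
        ((algebraMap K E).range : Set E).matrix = ((algebraMap K E).range : Set E).matrix ↔
      C ∈ (mapMulScalar K E n).range := by
  refine ⟨fun h => mem_range_mapMulScalar_of_mapsTo fun M hM => ?_, ?_⟩
  · exact h ▸ Set.mem_image_of_mem _ hM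
  · rintro ⟨p, rfl⟩
    exact image_conj_mapMulScalar p

theorem mem_ker_mapMulScalar [Nonempty n] {p : GL n K × Eˣ} :
    p ∈ (mapMulScalar K E n).ker ↔
      ∃ k : Kˣ, (scalar n k, (Units.map (algebraMap K E : K →* E) k)⁻¹) = p := by
  obtain ⟨A, e⟩ := p
  rw [MonoidHom.mem_ker, mapMulScalar_apply, mul_eq_one_iff_eq_inv, ← map_inv]
  constructor
  · intro h
    have hentry (k l : n) : algebraMap K E (A k l) = Matrix.scalar n ((e⁻¹ : Eˣ) : E) k l :=
      congrArg (fun g : GL n E => (g : Matrix n n E) k l) h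
    obtain ⟨i⟩ := ‹Nonempty n›
    have ha : algebraMap K E (A i i) = (e⁻¹ : Eˣ) := by simpa using hentry i i
    have ha0 : A i i ≠ 0 := fun h0 => (e⁻¹).ne_zero (by rw [← ha, h0, map_zero])
    have hA : (A : Matrix n n K) = Matrix.scalar n (A i i) := by
      refine Matrix.map_injective (algebraMap K E).injective (Matrix.ext fun k l => ?_)
      show algebraMap K E (A k l) = algebraMap K E (Matrix.scalar n (A i i) k l)
      rw [hentry]
      by_cases hkl : k = l <;> simp [hkl, ha]
    exact ⟨Units.mk0 _ ha0, Prod.ext (Units.ext hA.symm) (inv_eq_iff_eq_inv.2 (Units.ext ha))⟩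
  · rintro ⟨k, hk⟩
    obtain ⟨rfl, rfl⟩ := Prod.mk.inj hk
    rw [map_scalar, inv_inv]

theorem card_ker_mapMulScalar [Nonempty n] :
    Nat.card (mapMulScalar K E n).ker = Nat.card Kˣ := by
  refine (Nat.card_congr (Equiv.ofBijective (fun k => ⟨_, mem_ker_mapMulScalar.2 ⟨k, rfl⟩⟩)
    ⟨fun k l hkl => ?_, fun p => ?_⟩)).symm
  · simp only [Subtype.mk.injEq, Prod.mk.injEq] at hkl
    exact Units.map_injective (algebraMap K E).injective (inv_injective hkl.2)
  · obtain ⟨k, hk⟩ := mem_ker_mapMulScalar.1 p.2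
    exact ⟨k, Subtype.ext hk⟩

end GeneralLinearGroup

end Matrix

open Matrix.GeneralLinearGroup in
/-- Let `K ⊆ E` be finite fields and `n ≥ 1`.  The number of matrices
`C ∈ GLₙ(E)` with `C · Mₙ(K) · C⁻¹ = Mₙ(K)` (where `Mₙ(K)` is the subring of `Mₙ(E)` of
matrices with entries in `K`, i.e. in the image of `K → E`) equals
`|GLₙ(K)| · (|E| − 1)/(|K| − 1)`. -/
theorem stmt_8 (K E : Type*) [Field K] [Field E] [Algebra K E] [Finite E]
    (n : ℕ) (hn : 0 < n) :
    Nat.card {C : (Matrix (Fin n) (Fin n) E)ˣ //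
        (fun M => (C : Matrix (Fin n) (Fin n) E) * M *
            ((C⁻¹ : (Matrix (Fin n) (Fin n) E)ˣ) : Matrix (Fin n) (Fin n) E)) ''
          {M : Matrix (Fin n) (Fin n) E | ∀ i j, M i j ∈ (algebraMap K E).range}
        = {M : Matrix (Fin n) (Fin n) E | ∀ i j, M i j ∈ (algebraMap K E).range}}
      = Nat.card (Matrix (Fin n) (Fin n) K)ˣ * ((Nat.card E - 1) / (Nat.card K - 1)) := by
  have : Nonempty (Fin n) := Fin.pos_iff_nonempty.mp hn
  have : Finite K := Finite.of_injective _ (algebraMap K E).injective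
  refine (Nat.card_congr
    (Equiv.subtypeEquivRight image_conj_eq_iff_mem_range_mapMulScalar)).trans ?_
  have hcount := (mapMulScalar K E (Fin n)).ker.card_mul_index
  rw [Subgroup.index_ker, card_ker_mapMulScalar, Nat.card_prod] at hcount
  obtain ⟨m, hm⟩ := Subgroup.card_dvd_of_injective _
    (Units.map_injective (f := (algebraMap K E : K →* E)) (algebraMap K E).injective)
  rw [← Nat.card_units K, ← Nat.card_units E, hm, Nat.mul_div_cancel_left _ Nat.card_pos]
  apply Nat.eq_of_mul_eq_mul_left (Nat.card_pos : 0 < Nat.card Kˣ)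
  rw [hcount, hm]
  ring
end

section
/- For all real numbers a > 1 and all real numbers x, y with 0 < x < y, one has (a^y − 1)/(a^x − 1) ≤ (y/x) · a^{y−x}. -/
/- Dividing by `a ^ y`, the inequality says `x (1 - a⁻¹ ^ y) ≤ y (1 - a⁻¹ ^ x)`: the secant slopes
`(b ^ t - 1) / t` of the convex function `t ↦ b ^ t` through `0` increase with `t`. -/

theorem rpow_sub_one_div_le_rpow_sub_one_div {b x y : ℝ} (hb : 0 < b) (hx : x ≠ 0) (hy : y ≠ 0)
    (hxy : x ≤ y) : (b ^ x - 1) / x ≤ (b ^ y - 1) / y := by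
  simpa using (convexOn_rpow_left hb).secant_mono (Set.mem_univ 0) (Set.mem_univ x)
    (Set.mem_univ y) hx hy hxy

/-- For real `a > 1` and `0 < x < y` one has
`(a^y − 1)/(a^x − 1) ≤ (y/x) · a^(y−x)` (real powers). -/
theorem stmt_12 (a x y : ℝ) (ha : 1 < a) (hx : 0 < x) (hxy : x < y) :
    (a ^ y - 1) / (a ^ x - 1) ≤ (y / x) * a ^ (y - x) := by
  have ha₀ : 0 < a := zero_lt_one.trans ha
  have hy : 0 < y := hx.trans hxy
  have hu : 1 < a ^ x := Real.one_lt_rpow ha hx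
  have hslope := rpow_sub_one_div_le_rpow_sub_one_div (inv_pos.2 ha₀) hx.ne' hy.ne' hxy.le
  rw [Real.inv_rpow ha₀.le, Real.inv_rpow ha₀.le, div_le_div_iff₀ hx hy] at hslope
  rw [Real.rpow_sub ha₀, div_le_iff₀ (sub_pos.2 hu)]
  field_simp at hslope ⊢
  linarith
end

section
/- Let S = ℂ[X,Y]/(Y² − X³ + 1), let x and y denote the images of X and Y in S, and regard S as an algebra over the polynomial ring R = ℂ[T] via the ℂ-algebra homomorphism R → S sending T to x³ (equivalently, to y² + 1). Then S cannot be generated by one element as an R-algebra: for every h ∈ S, the R-subalgebra of S generated by h is a proper subalgebra of S. -/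
noncomputable section

/-- The coordinate ring `S = ℂ[X,Y]/(Y² − X³ + 1)` of the affine curve `y² = x³ − 1`. -/
abbrev CurveRing : Type :=
  MvPolynomial (Fin 2) ℂ ⧸
    Ideal.span {(MvPolynomial.X 1 : MvPolynomial (Fin 2) ℂ) ^ 2 - MvPolynomial.X 0 ^ 3 + 1}

/-- `x`, the image of `X` in `S`. -/
def curveX : CurveRing :=
  Ideal.Quotient.mk _ (MvPolynomial.X 0)

/-- `y`, the image of `Y` in `S`. -/
def curveY : CurveRing :=
  Ideal.Quotient.mk _ (MvPolynomial.X 1)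

/-- `S` regarded as an algebra over `R = ℂ[T]` via the `ℂ`-algebra map `T ↦ x³`. -/
instance : Algebra (Polynomial ℂ) CurveRing :=
  ((Polynomial.aeval (curveX ^ 3) : Polynomial ℂ →ₐ[ℂ] CurveRing) :
    Polynomial ℂ →+* CurveRing).toAlgebra

/-!
If `S = ℂ[x³][h]`, every ring endomorphism `σ` of `S` fixing `ℂ[x³]` satisfies
`σ h - h ∣ σ w - w` for all `w`, because `σ w - w = p(σ h) - p(h)` when `w = p(h)`.
Write `S = ℂ[x] ⊕ ℂ[x] y` and `h = P + Q y`, and take norms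
`N(a + b y) = a² - (x³ - 1) b²` into `ℂ[x]`.
For `σ : y ↦ -y` this gives `Q y ∣ y`, so `Q` is a nonzero constant.
For `σ : x ↦ ζ x, y ↦ -y` with `ζ` a primitive cube root of unity, `σ h - h` has
`y`-coefficient `-2Q ≠ 0` and divides `σ x - x = (ζ - 1) x`. But the norm of an element with
nonzero `y`-coefficient has odd degree at least `3`, so it cannot divide `(ζ - 1)² x²`.
-/

open Polynomial QuadraticAlgebra

theorem sub_dvd_sub_of_mem_adjoin {R A B : Type*} [CommSemiring R] [CommRing A] [Algebra R A]
    [CommRing B] {f g : A →+* B} (hfg : f.comp (algebraMap R A) = g.comp (algebraMap R A))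
    {h z : A} (hz : z ∈ Algebra.adjoin R {h}) : f h - g h ∣ f z - g z := by
  induction hz using Algebra.adjoin_induction with
  | mem x hx => rw [Set.mem_singleton_iff.mp hx]
  | algebraMap r =>
    simp [show f (algebraMap R A r) = g (algebraMap R A r) from RingHom.congr_fun hfg r]
  | add u v _ _ hu hv => simpa only [map_add, add_sub_add_comm] using dvd_add hu hv
  | mul u v _ _ hu hv =>
    rw [map_mul, map_mul, show f u * f v - g u * g v = f u * (f v - g v) + (f u - g u) * g v by ring]
    exact dvd_add (hv.mul_left _) (hu.mul_right _)

theorem Polynomial.natDegree_le_natDegree_sq_sub_mul_sq {R : Type*} [CommRing R] [IsDomain R]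
    {a p q : R[X]} (ha : Odd a.natDegree) (hq : q ≠ 0) :
    a.natDegree ≤ (p ^ 2 - a * q ^ 2).natDegree := by
  have ha0 : a ≠ 0 := by rintro rfl; simp at ha
  have hdeg : (a * q ^ 2).natDegree = a.natDegree + 2 * q.natDegree := by
    rw [natDegree_mul ha0 (pow_ne_zero 2 hq), natDegree_pow]
  by_contra! hlt
  have hsq : (p ^ 2).natDegree = (a * q ^ 2).natDegree := by
    rw [← sub_add_cancel (p ^ 2) (a * q ^ 2)]
    exact natDegree_add_eq_right_of_natDegree_lt (by omega)
  rw [natDegree_pow, hdeg] at hsq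
  obtain ⟨k, hk⟩ := ha
  omega

theorem Polynomial.aeval_C_mul_X_expand {R : Type*} [CommRing R] {n : ℕ} {ζ : R} (hζ : ζ ^ n = 1)
    (p : R[X]) : aeval (C ζ * X) (expand R n p) = expand R n p := by
  rw [expand_aeval, mul_pow, ← Polynomial.C_pow, hζ, C_1, one_mul]
  rfl

namespace QuadraticAlgebra

variable {R S : Type*} [CommRing R] [CommRing S]

def mapRingHom {a b : R} {a' b' : S} (f : R →+* S) (ha : f a = a') (hb : f b = b') :
    QuadraticAlgebra R a b →+* QuadraticAlgebra S a' b' where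
  toFun z := ⟨f z.re, f z.im⟩
  map_one' := by ext <;> simp
  map_mul' z w := by ext <;> simp [← ha, ← hb]
  map_zero' := by ext <;> simp
  map_add' z w := by ext <;> simp

@[simp]
theorem im_mapRingHom {a b : R} {a' b' : S} (f : R →+* S) (ha : f a = a') (hb : f b = b')
    (z : QuadraticAlgebra R a b) : (mapRingHom f ha hb z).im = f z.im := rfl

@[simp]
theorem re_mapRingHom {a b : R} {a' b' : S} (f : R →+* S) (ha : f a = a') (hb : f b = b')
    (z : QuadraticAlgebra R a b) : (mapRingHom f ha hb z).re = f z.re := rfl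

theorem star_algebraMap {a b : R} (r : R) :
    star (algebraMap R (QuadraticAlgebra R a b) r) = algebraMap R _ r := by
  refine QuadraticAlgebra.ext ?_ ?_ <;> simp [algebraMap_re, algebraMap_im]

theorem norm_eq_sq_sub_mul_sq {a : R} (z : QuadraticAlgebra R a 0) :
    norm z = z.re ^ 2 - a * z.im ^ 2 := by
  simp [norm_def]
  ring

theorem isUnit_im_of_star_sub_self_dvd [IsDomain R] {a b : R} (hab : b ^ 2 + 4 * a ≠ 0)
    {z : QuadraticAlgebra R a b} (h : star z - z ∣ star ω - ω) : IsUnit z.im := by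
  obtain ⟨w, hw⟩ := h
  have hz : star z - z = algebraMap R _ z.im * (star ω - ω) := by
    rw [← neg_sub, sub_star, Algebra.smul_def]
    ring
  have hnorm : norm (star ω - ω : QuadraticAlgebra R a b) = -(b ^ 2 + 4 * a) := by
    simp [norm_def]
    ring
  have hw' := congrArg norm hw
  rw [hz, map_mul, map_mul, norm_algebraMap, hnorm] at hw'
  have h1 : z.im ^ 2 * norm w = 1 := by
    apply mul_left_cancel₀ (neg_ne_zero.mpr hab)
    linear_combination -hw'
  exact (isUnit_pow_iff two_ne_zero).mp (IsUnit.of_mul_eq_one _ h1)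

theorem im_eq_zero_of_dvd_algebraMap [IsDomain R] {a : R[X]} (ha : Odd a.natDegree)
    {z : QuadraticAlgebra R[X] a 0} {r : R[X]} (hr : r ≠ 0) (hdeg : 2 * r.natDegree < a.natDegree)
    (h : z ∣ algebraMap R[X] _ r) : z.im = 0 := by
  by_contra him
  have hdvd : norm z ∣ r ^ 2 := by simpa using map_dvd norm h
  have hle := natDegree_le_of_dvd hdvd (pow_ne_zero 2 hr)
  rw [norm_eq_sq_sub_mul_sq, natDegree_pow] at hle
  have hge := natDegree_le_natDegree_sq_sub_mul_sq (p := z.re) ha him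
  omega

end QuadraticAlgebra

abbrev CurveModel : Type := QuadraticAlgebra ℂ[X] (X ^ 3 - 1) 0

theorem natDegree_X_pow_three_sub_one : (X ^ 3 - 1 : ℂ[X]).natDegree = 3 := by
  rw [natDegree_sub_eq_left_of_natDegree_lt] <;> simp

def toCurveModel : CurveRing →ₐ[ℂ] CurveModel :=
  Ideal.Quotient.liftₐ _ (MvPolynomial.aeval ![algebraMap ℂ[X] CurveModel X, ω]) fun p hp => by
    obtain ⟨q, rfl⟩ := Ideal.mem_span_singleton'.mp hp
    rw [map_mul]
    convert mul_zero _
    ext <;> simp [pow_succ]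

theorem toCurveModel_curveX : toCurveModel curveX = algebraMap ℂ[X] CurveModel X :=
  MvPolynomial.aeval_X _ 0

theorem toCurveModel_curveY : toCurveModel curveY = ω :=
  MvPolynomial.aeval_X _ 1

theorem toCurveModel_aeval_curveX (p : ℂ[X]) :
    toCurveModel (aeval curveX p) = algebraMap ℂ[X] CurveModel p := by
  rw [← aeval_algHom_apply, toCurveModel_curveX, aeval_algebraMap_apply, aeval_X_left_apply]

theorem toCurveModel_surjective : Function.Surjective toCurveModel := by
  rintro ⟨p, q⟩
  refine ⟨aeval curveX p + aeval curveX q * curveY, ?_⟩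
  rw [map_add, map_mul, toCurveModel_aeval_curveX, toCurveModel_aeval_curveX, toCurveModel_curveY,
    mk_eq_add_smul_omega, Algebra.smul_def]

theorem toCurveModel_algebraMap (p : ℂ[X]) :
    toCurveModel (algebraMap ℂ[X] CurveRing p) = algebraMap ℂ[X] CurveModel (expand ℂ 3 p) := by
  change toCurveModel (aeval (curveX ^ 3) p) = _
  rw [← aeval_algHom_apply, map_pow, toCurveModel_curveX, ← map_pow, aeval_algebraMap_apply]
  rfl

theorem sub_dvd_sub_of_adjoin_eq_top {h : CurveRing} (hgen : Algebra.adjoin ℂ[X] {h} = ⊤)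
    {σ : CurveModel →+* CurveModel}
    (hσ : ∀ p, σ (algebraMap ℂ[X] CurveModel (expand ℂ 3 p)) = algebraMap ℂ[X] _ (expand ℂ 3 p))
    (w : CurveModel) : σ (toCurveModel h) - toCurveModel h ∣ σ w - w := by
  obtain ⟨s, rfl⟩ := toCurveModel_surjective w
  refine sub_dvd_sub_of_mem_adjoin (f := σ.comp toCurveModel.toRingHom)
    (g := toCurveModel.toRingHom) ?_ (hgen ▸ Algebra.mem_top)
  refine RingHom.ext fun p => ?_
  simp only [RingHom.comp_apply, AlgHom.toRingHom_eq_coe, RingHom.coe_coe,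
    toCurveModel_algebraMap, hσ]

theorem isUnit_im_of_adjoin_eq_top {h : CurveRing} (hgen : Algebra.adjoin ℂ[X] {h} = ⊤) :
    IsUnit (toCurveModel h).im := by
  have hdisc : (0 : ℂ[X]) ^ 2 + 4 * (X ^ 3 - 1) ≠ 0 := by
    simpa using X_pow_sub_C_ne_zero three_pos (1 : ℂ)
  refine isUnit_im_of_star_sub_self_dvd hdisc (sub_dvd_sub_of_adjoin_eq_top hgen
    (σ := starRingEnd CurveModel) (fun p => ?_) ω)
  rw [starRingEnd_apply, star_algebraMap]

def curveRotation {ζ : ℂ} (hζ : ζ ^ 3 = 1) : CurveModel →+* CurveModel :=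
  (mapRingHom (a' := X ^ 3 - 1) (b' := 0) (aeval (C ζ * X)).toRingHom
    (by simp [mul_pow, ← Polynomial.C_pow, hζ]) (map_zero _)).comp (starRingEnd CurveModel)

theorem curveRotation_algebraMap {ζ : ℂ} (hζ : ζ ^ 3 = 1) (p : ℂ[X]) :
    curveRotation hζ (algebraMap ℂ[X] CurveModel p) =
      algebraMap ℂ[X] CurveModel (aeval (C ζ * X) p) := by
  simp only [curveRotation, RingHom.comp_apply, starRingEnd_apply, star_algebraMap]
  refine QuadraticAlgebra.ext ?_ ?_ <;> simp [algebraMap_re, algebraMap_im]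

theorem im_curveRotation {ζ : ℂ} (hζ : ζ ^ 3 = 1) (z : CurveModel) :
    (curveRotation hζ z).im = -aeval (C ζ * X) z.im := by
  simp [curveRotation, starRingEnd_apply]

theorem im_curveRotation_sub_eq_zero_of_adjoin_eq_top {h : CurveRing}
    (hgen : Algebra.adjoin ℂ[X] {h} = ⊤) {ζ : ℂ} (hζ : IsPrimitiveRoot ζ 3) :
    (curveRotation hζ.pow_eq_one (toCurveModel h) - toCurveModel h).im = 0 := by
  have hζ1 : ζ - 1 ≠ 0 := sub_ne_zero.mpr (hζ.ne_one (by norm_num))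
  have hdvd := sub_dvd_sub_of_adjoin_eq_top hgen (σ := curveRotation hζ.pow_eq_one)
    (fun p => by rw [curveRotation_algebraMap, aeval_C_mul_X_expand hζ.pow_eq_one])
    (algebraMap ℂ[X] _ X)
  rw [curveRotation_algebraMap, aeval_X, ← map_sub,
    show C ζ * X - X = C (ζ - 1) * X by simp [sub_mul]] at hdvd
  refine im_eq_zero_of_dvd_algebraMap (by rw [natDegree_X_pow_three_sub_one]; decide)
    (mul_ne_zero (C_ne_zero.mpr hζ1) X_ne_zero) ?_ hdvd
  rw [natDegree_C_mul_X _ hζ1, natDegree_X_pow_three_sub_one]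
  norm_num

/-- `S = ℂ[X,Y]/(Y² − X³ + 1)`, viewed as an algebra over
`R = ℂ[T]` via `T ↦ x³`, cannot be generated by one element as an `R`-algebra: for
every `h ∈ S` the `R`-subalgebra generated by `h` is proper. -/
theorem stmt_18 (h : CurveRing) :
    Algebra.adjoin (Polynomial ℂ) ({h} : Set CurveRing) ≠ ⊤ := by
  intro hgen
  obtain ⟨β, hβ, hβh⟩ := Polynomial.isUnit_iff.mp (isUnit_im_of_adjoin_eq_top hgen)
  obtain ⟨ζ, hζ⟩ : ∃ ζ : ℂ, IsPrimitiveRoot ζ 3 :=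
    ⟨_, Complex.isPrimitiveRoot_exp 3 (by norm_num)⟩
  have him := im_curveRotation_sub_eq_zero_of_adjoin_eq_top hgen hζ
  rw [im_sub, im_curveRotation, ← hβh, aeval_C, Polynomial.algebraMap_eq] at him
  have h2β : (2 : ℂ[X]) * C β = 0 := by linear_combination -him
  simp [hβ.ne_zero] at h2β
end
end
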